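/- Let P be a set of n points in ℝ², let 2 ≤ K ≤ n, and suppose a family C of circles each containing between k and 2k points of P has |C| = O(n/k) where k ≥ c n^{1/2}. Then the total number of weighted incidences between points of P and perpendicular bisectors determined by pairs of points lying on a common circle of C (each bisector weighted by the number of such pairs determining it) is O(n²). -/

import Mathlib

open scoped Classical

noncomputable section

abbrev Plane := EuclideanSpace ℝ (Fin 2)

/-! A point `p` other than the centre `o` of a circle lies on the bisector of at most one chord
through each point `q` of the circle: the circle about `p` through `q` meets the given circle in
at most one further point. So a circle with `m` points of `P` contributes at most `m` incidences
for each non-central point of `P`, and at most `m²` for its centre, i.e. at most `2nm ≤ 4nk` in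
all; summing over the `O(n/k)` circles gives `O(n²)`. -/

open Finset Module

section Bisector

variable {P : Type*} [MetricSpace P]

def equidistantPairs (s : Finset P) (p : P) : Finset (P × P) :=
  (s ×ˢ s).filter fun qr => qr.1 ≠ qr.2 ∧ dist p qr.1 = dist p qr.2

def bisectorIncidences (t s : Finset P) : Finset (P × P × P) :=
  (t ×ˢ s ×ˢ s).filter fun x => x.2.1 ≠ x.2.2 ∧ dist x.1 x.2.1 = dist x.1 x.2.2

theorem card_bisectorIncidences (t s : Finset P) :
    #(bisectorIncidences t s) = ∑ p ∈ t, #(equidistantPairs s p) := by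
  simp only [bisectorIncidences, equidistantPairs, card_filter, sum_product]

end Bisector

section Circle

variable {V P : Type*} [NormedAddCommGroup V] [InnerProductSpace ℝ V] [FiniteDimensional ℝ V]
  [MetricSpace P] [NormedAddTorsor V P]

theorem card_equidistantPairs_le_of_ne_center (hd : finrank ℝ V = 2) {s : Finset P} {o p : P}
    {R : ℝ} (hs : ∀ q ∈ s, dist q o = R) (hpo : p ≠ o) : #(equidistantPairs s p) ≤ #s := by
  refine card_le_card_of_injOn Prod.fst (fun qr hqr => (mem_filter.1 hqr).1 |> mem_product.1 |>.1)
    fun a ha b hb hab => ?_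
  simp only [equidistantPairs, coe_filter, Set.mem_ofPred_eq, mem_product] at ha hb
  obtain ⟨⟨ha₁, ha₂⟩, hane, had⟩ := ha
  obtain ⟨⟨-, hb₂⟩, hbne, hbd⟩ := hb
  rw [hab] at hane had
  rcases EuclideanGeometry.eq_of_dist_eq_of_dist_eq_of_finrank_eq_two hd hpo.symm hane
    (hab ▸ hs _ ha₁) (hs _ ha₂) (hs _ hb₂) (dist_comm _ _)
    (by simpa only [dist_comm] using had.symm) (by simpa only [dist_comm] using hbd.symm) with h | h
  · exact absurd h hbne.symm
  · exact Prod.ext hab h.symm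

theorem card_bisectorIncidences_le_of_forall_dist_eq (hd : finrank ℝ V = 2) (t : Finset P)
    {s : Finset P} {o : P} {R : ℝ} (hs : ∀ q ∈ s, dist q o = R) :
    #(bisectorIncidences t s) ≤ #t * #s + #s * #s := by
  have hfibre : ∀ p, #(equidistantPairs s p) ≤ #s + if p = o then #s * #s else 0 := by
    intro p
    split_ifs with hpo
    · exact (card_filter_le _ _).trans (by rw [card_product]; omega)
    · exact card_equidistantPairs_le_of_ne_center hd hs hpo
  calc #(bisectorIncidences t s) = ∑ p ∈ t, #(equidistantPairs s p) :=
        card_bisectorIncidences t s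
    _ ≤ ∑ p ∈ t, (#s + if p = o then #s * #s else 0) := sum_le_sum fun p _ => hfibre p
    _ ≤ #t * #s + #s * #s := by
        rw [sum_add_distrib, sum_const, smul_eq_mul, sum_ite_eq']
        gcongr
        split_ifs <;> simp

theorem card_bisectorIncidences_le_two_mul (hd : finrank ℝ V = 2) {t s : Finset P} (hst : s ⊆ t)
    {o : P} {R : ℝ} (hs : ∀ q ∈ s, dist q o = R) :
    #(bisectorIncidences t s) ≤ 2 * #t * #s := by
  have := card_bisectorIncidences_le_of_forall_dist_eq hd t hs
  have := Nat.mul_le_mul_right #s (card_le_card hst)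
  linarith

end Circle

theorem rich_circle_incidences (c A : ℝ) (hA : 0 < A) :
    ∃ C' > (0:ℝ), ∀ (P : Finset Plane) (𝒞 : Finset (Set Plane)) (k K : ℝ),
      2 ≤ K → K ≤ (P.card : ℝ) →
      c * (P.card : ℝ) ^ ((1:ℝ)/2) ≤ k →
      (∀ S ∈ 𝒞, (∃ o r, 0 < r ∧ S = Metric.sphere o r) ∧
        k ≤ ((P.filter (· ∈ S)).card : ℝ) ∧ ((P.filter (· ∈ S)).card : ℝ) ≤ 2 * k) →
      (𝒞.card : ℝ) ≤ A * (P.card : ℝ) / k →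
      (Set.ncard {t : Plane × Plane × Plane |
          t.1 ∈ P ∧ t.2.1 ∈ P ∧ t.2.2 ∈ P ∧ t.2.1 ≠ t.2.2 ∧
          (∃ S ∈ 𝒞, t.2.1 ∈ S ∧ t.2.2 ∈ S) ∧
          dist t.1 t.2.1 = dist t.1 t.2.2} : ℝ) ≤ C' * (P.card : ℝ) ^ 2 := by
  refine ⟨4 * A, by positivity, fun P 𝒞 k K _ _ _ h𝒞 h𝒞card => ?_⟩
  set G : Set Plane → Finset (Plane × Plane × Plane) :=
    fun S => bisectorIncidences P (P.filter (· ∈ S))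
  have hcircle : ∀ S ∈ 𝒞, (#(G S) : ℝ) ≤ 4 * #P * k := by
    intro S hS
    obtain ⟨⟨o, R, -, rfl⟩, -, hm⟩ := h𝒞 S hS
    have hG : (#(G (Metric.sphere o R)) : ℝ) ≤ 2 * #P * #(P.filter (· ∈ Metric.sphere o R)) := by
      exact_mod_cast card_bisectorIncidences_le_two_mul finrank_euclideanSpace_fin
        (filter_subset _ P) fun q hq => (mem_filter.1 hq).2
    nlinarith
  have hk : (#𝒞 : ℝ) * k ≤ A * #P := by
    rcases le_or_gt k 0 with hk | hk
    · exact (mul_nonpos_of_nonneg_of_nonpos (by positivity) hk).trans (by positivity)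
    · exact (le_div_iff₀ hk).1 h𝒞card
  calc (Set.ncard _ : ℝ) ≤ #(𝒞.biUnion G) := by
        rw [← Set.ncard_coe_finset, Nat.cast_le]
        refine Set.ncard_le_ncard ?_ (finite_toSet _)
        rintro ⟨p, q, r⟩ ⟨hp, hq, hr, hqr, ⟨S, hS, hqS, hrS⟩, hd⟩
        simp only [G, bisectorIncidences, coe_biUnion, Set.mem_iUnion, coe_filter, mem_product,
          mem_filter]
        exact ⟨S, hS, ⟨hp, ⟨hq, hqS⟩, hr, hrS⟩, hqr, hd⟩
    _ ≤ ∑ S ∈ 𝒞, (#(G S) : ℝ) := by exact_mod_cast card_biUnion_le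
    _ ≤ ∑ _S ∈ 𝒞, 4 * #P * k := sum_le_sum hcircle
    _ = 4 * #P * (#𝒞 * k) := by rw [sum_const, nsmul_eq_mul]; ring
    _ ≤ 4 * #P * (A * #P) := by gcongr
    _ = 4 * A * (#P : ℝ) ^ 2 := by ring
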